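/- Assume A uses only read/write registers and n ≥ 3. If a finite execution α of A is closed, then the competitors-valency W(α) contains exactly one element. -/

import Mathlib

set_option autoImplicit false

/-! ## Base objects and primitives -/

/-- A base object: a shared-memory object accessed via atomic primitives.
Responses of primitives are encoded as lists of naturals. -/
structure BaseObject : Type 1 where
  State : Type
  init : State
  Prim : Type
  apply : Prim → State → State × List ℕ

/-- A base object has *interfering* primitives if at any state, the application of
any pair of primitives either commutes or one overwrites the other. -/
def Interfering (B : BaseObject) : Prop :=
  ∀ (f g : B.Prim) (s : B.State),
    (B.apply g (B.apply f s).1).1 = (B.apply f (B.apply g s).1).1 ∨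
    (B.apply f (B.apply g s).1).1 = (B.apply f s).1 ∨
    (B.apply g (B.apply f s).1).1 = (B.apply g s).1

/-- A read/write register: primitive `some v` writes `v`, primitive `none` reads. -/
def RWRegister : BaseObject where
  State := ℕ
  init := 0
  Prim := Option ℕ
  apply := fun p s =>
    match p with
    | some v => (v, [])
    | none => (s, [s])

/-- A `w`-window register stores the sequence of the last `w` values written to it;
`some v` appends `v` (dropping the oldest value if the length exceeds `w`),
`none` reads the stored sequence. -/
def WindowRegister (w : ℕ) : BaseObject where
  State := List ℕ
  init := []
  Prim := Option ℕ
  apply := fun p s =>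
    match p with
    | some v => ((s ++ [v]).drop (s.length + 1 - w), [])
    | none => (s, s)

/-- A test&set object: `T&S()` atomically sets the bit and returns the previous value. -/
def TestAndSet : BaseObject where
  State := Bool
  init := false
  Prim := Unit
  apply := fun _ s => (true, [if s then 1 else 0])

/-! ## Sequential specifications -/

/-- A (possibly nondeterministic) sequential specification for `n` processes.
`δ s i op s' r` holds if process `i` invoking `op` in state `s` may move the object
to state `s'` returning `r`.  `allowed i hist op` says whether process `i`, having
already invoked the operations `hist`, may invoke `op` (used to express one-shot
objects and the referee/competitor roles). -/
structure Spec (n : ℕ) : Type 1 where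
  Op : Type
  Res : Type
  State : Type
  init : State
  δ : State → Fin n → Op → State → Res → Prop
  allowed : Fin n → List Op → Op → Bool

/-- Valid sequential executions of a specification, starting at a given state. -/
inductive SeqRun {n : ℕ} (S : Spec n) : S.State → List (Fin n × S.Op × S.Res) → Prop
  | nil (s : S.State) : SeqRun S s []
  | cons {s : S.State} {i : Fin n} {op : S.Op} {s' : S.State} {r : S.Res}
      {l : List (Fin n × S.Op × S.Res)} :
      S.δ s i op s' r → SeqRun S s' l → SeqRun S s ((i, op, r) :: l)

/-! ## Implementations, configurations and executions -/

/-- Events of an execution: high-level invocations/responses and primitive steps. -/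
inductive Event (n : ℕ) (S : Spec n) : Type
  | inv (i : Fin n) (op : S.Op)
  | res (i : Fin n) (r : S.Res)
  | step (i : Fin n)

/-- The process performing an event. -/
def Event.proc {n : ℕ} {S : Spec n} : Event n S → Fin n
  | .inv i _ => i
  | .res i _ => i
  | .step i => i

/-- An implementation of the high-level object `S` for `n` processes from base objects
`M o`, `o : ι`: a deterministic state machine per process.  In local state `ℓ`,
process `i`'s next primitive step applies `prim i ℓ` to base object `obj i ℓ` and
updates the local state with the response via `updL`; `ret i ℓ` is the response of the
current high-level operation once it is ready. -/
structure Impl (n : ℕ) (S : Spec n) (ι : Type) (M : ι → BaseObject) : Type 1 where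
  Local : Fin n → Type
  initL : ∀ i, Local i
  invokeL : ∀ i, S.Op → Local i → Local i
  obj : ∀ i, Local i → ι
  prim : ∀ i (ℓ : Local i), (M (obj i ℓ)).Prim
  updL : ∀ i, Local i → List ℕ → Local i
  ret : ∀ i, Local i → Option S.Res

/-- A configuration: states of all base objects and all processes
(local state, pending operation, history of invoked operations). -/
structure Config {n : ℕ} {S : Spec n} {ι : Type} {M : ι → BaseObject}
    (A : Impl n S ι M) : Type where
  mem : ∀ o, (M o).State
  loc : ∀ i, A.Local i
  pend : Fin n → Option S.Op
  hist : Fin n → List S.Op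

open Classical in
/-- Update the state of one base object in the memory. -/
noncomputable def updMem {ι : Type} {M : ι → BaseObject}
    (mem : ∀ o, (M o).State) (o : ι) (s : (M o).State) : ∀ o', (M o').State :=
  fun o' =>
    if h : o' = o then cast (congrArg (fun x => (M x).State) h).symm s else mem o'

open Classical in
/-- The (deterministic) transition of a configuration by an event; `none` if the event
is not enabled.  An invocation requires the process to be idle and the operation to be
allowed by the specification; a primitive step requires a pending operation whose
response is not yet ready; a response requires the response to be ready. -/
noncomputable def nextConfig {n : ℕ} {S : Spec n} {ι : Type} {M : ι → BaseObject}
    (A : Impl n S ι M) (C : Config A) : Event n S → Option (Config A)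
  | .inv i op =>
    match C.pend i with
    | some _ => none
    | none =>
      if S.allowed i (C.hist i) op then
        some { C with
          pend := Function.update C.pend i (some op)
          hist := Function.update C.hist i (C.hist i ++ [op])
          loc := Function.update C.loc i (A.invokeL i op (C.loc i)) }
      else none
  | .step i =>
    match C.pend i with
    | none => none
    | some _ =>
      if A.ret i (C.loc i) = none then
        some { C with
          mem := updMem C.mem (A.obj i (C.loc i))
            ((M (A.obj i (C.loc i))).apply (A.prim i (C.loc i))
              (C.mem (A.obj i (C.loc i)))).1
          loc := Function.update C.loc i
            (A.updL i (C.loc i)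
              ((M (A.obj i (C.loc i))).apply (A.prim i (C.loc i))
                (C.mem (A.obj i (C.loc i)))).2) }
      else none
  | .res i r =>
    match C.pend i with
    | none => none
    | some _ =>
      if A.ret i (C.loc i) = some r then
        some { C with pend := Function.update C.pend i none }
      else none

/-- The initial configuration. -/
def initConfig {n : ℕ} {S : Spec n} {ι : Type} {M : ι → BaseObject}
    (A : Impl n S ι M) : Config A :=
  { mem := fun o => (M o).init
    loc := fun i => A.initL i
    pend := fun _ => none
    hist := fun _ => [] }

/-- The configuration reached by a finite sequence of events from the initial
configuration (`none` if the sequence is not a valid execution). -/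
noncomputable def execConfig {n : ℕ} {S : Spec n} {ι : Type} {M : ι → BaseObject}
    (A : Impl n S ι M) (α : List (Event n S)) : Option (Config A) :=
  α.foldlM (fun C e => nextConfig A C e) (initConfig A)

/-- `α` is a (finite) execution of the implementation `A`. -/
def IsExec {n : ℕ} {S : Spec n} {ι : Type} {M : ι → BaseObject}
    (A : Impl n S ι M) (α : List (Event n S)) : Prop :=
  (execConfig A α).isSome = true

/-- The length-`m` prefix of an infinite sequence of events. -/
def prefE {n : ℕ} {S : Spec n} (E : ℕ → Event n S) (m : ℕ) : List (Event n S) :=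
  (List.range m).map E

/-! ## Linearizability -/

/-- In execution `α`, the invocation at position `j` is matched by the response at
position `k` with output `r` (no earlier response of the same process intervening). -/
def Matches {n : ℕ} {S : Spec n} (α : List (Event n S)) (j k : ℕ) (r : S.Res) : Prop :=
  ∃ i op, α[j]? = some (Event.inv i op) ∧ α[k]? = some (Event.res i r) ∧ j < k ∧
    ∀ m, j < m → m < k → ∀ r', α[m]? ≠ some (Event.res i r')

/-- The operation invoked at position `j` precedes (returns before the invocation of)
the operation invoked at position `j'`. -/
def Precedes {n : ℕ} {S : Spec n} (α : List (Event n S)) (j j' : ℕ) : Prop :=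
  ∃ k r, Matches α j k r ∧ k < j'

/-- `σ` is a linearization of the execution `α`: a sequence of operation instances of
`α` (identified by the position of their invocation, paired with a response) that
contains every complete operation of `α` with its actual output and possibly some
pending ones, respects the real-time order of `α`, and is a valid sequential
execution of the specification. -/
structure IsLinearization {n : ℕ} (S : Spec n) (α : List (Event n S))
    (σ : List (ℕ × S.Res)) : Prop where
  inv_mem : ∀ p ∈ σ, ∃ i op, α[p.1]? = some (Event.inv i op)
  nodup : (σ.map Prod.fst).Nodup
  complete_mem : ∀ j k r, Matches α j k r → (j, r) ∈ σ
  complete_out : ∀ j k r r', Matches α j k r → (j, r') ∈ σ → r' = r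
  realtime : σ.Pairwise (fun a b => ¬ Precedes α b.1 a.1)
  valid : ∃ l : List (Fin n × S.Op × S.Res),
    List.Forall₂ (fun (p : ℕ × S.Res) (e : Fin n × S.Op × S.Res) =>
      α[p.1]? = some (Event.inv e.1 e.2.1) ∧ p.2 = e.2.2) σ l ∧
    SeqRun S S.init l

/-- `L` is a linearization function for `A`: it maps every execution to a
linearization of it. -/
def IsLinFun {n : ℕ} {S : Spec n} {ι : Type} {M : ι → BaseObject}
    (A : Impl n S ι M) (L : List (Event n S) → List (ℕ × S.Res)) : Prop :=
  ∀ α, IsExec A α → IsLinearization S α (L α)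

/-- `L` is prefix-closed: the linearization of a prefix is a prefix of the
linearization of an extension. -/
def PrefixClosedLin {n : ℕ} {S : Spec n} {ι : Type} {M : ι → BaseObject}
    (A : Impl n S ι M) (L : List (Event n S) → List (ℕ × S.Res)) : Prop :=
  ∀ α β, IsExec A (α ++ β) → L α <+: L (α ++ β)

/-- `L` is subsequence-closed: the linearization of a prefix is a subsequence of the
linearization of an extension. -/
def SubseqClosedLin {n : ℕ} {S : Spec n} {ι : Type} {M : ι → BaseObject}
    (A : Impl n S ι M) (L : List (Event n S) → List (ℕ × S.Res)) : Prop :=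
  ∀ α β, IsExec A (α ++ β) → List.Sublist (L α) (L (α ++ β))

/-- Strong linearizability: there is a prefix-closed linearization function. -/
def StronglyLinearizable {n : ℕ} {S : Spec n} {ι : Type} {M : ι → BaseObject}
    (A : Impl n S ι M) : Prop :=
  ∃ L, IsLinFun A L ∧ PrefixClosedLin A L

/-- Decisive linearizability: there is a subsequence-closed linearization function. -/
def DecisivelyLinearizable {n : ℕ} {S : Spec n} {ι : Type} {M : ι → BaseObject}
    (A : Impl n S ι M) : Prop :=
  ∃ L, IsLinFun A L ∧ SubseqClosedLin A L

/-! ## Progress conditions -/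

/-- Wait-freedom: in every infinite execution, a process that takes infinitely many
primitive steps completes infinitely many operations. -/
def WaitFree {n : ℕ} {S : Spec n} {ι : Type} {M : ι → BaseObject}
    (A : Impl n S ι M) : Prop :=
  ∀ E : ℕ → Event n S, (∀ m, IsExec A (prefE E m)) →
    ∀ i : Fin n, (∀ m, ∃ m', m ≤ m' ∧ E m' = Event.step i) →
      ∀ m, ∃ m', m ≤ m' ∧ ∃ r, E m' = Event.res i r

/-- Lock-freedom: in every infinite execution, infinitely many operations complete. -/
def LockFree {n : ℕ} {S : Spec n} {ι : Type} {M : ι → BaseObject}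
    (A : Impl n S ι M) : Prop :=
  ∀ E : ℕ → Event n S, (∀ m, IsExec A (prefE E m)) →
    ∀ m, ∃ m', m ≤ m' ∧ ∃ i r, E m' = Event.res i r

/-! ## High-level object specifications -/

/-- Queue: operation `some v` is `enqueue(v)` (returning `none`), operation `none` is
`dequeue()`, returning the oldest enqueued value not yet dequeued (`some v`) or
`none` (empty). -/
def QueueSpec (n : ℕ) : Spec n where
  Op := Option ℕ
  Res := Option ℕ
  State := List ℕ
  init := []
  δ := fun s _ op s' r =>
    (∃ v, op = some v ∧ s' = s ++ [v] ∧ r = none) ∨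
    (op = none ∧ ((s = [] ∧ s' = [] ∧ r = none) ∨ ∃ v t, s = v :: t ∧ s' = t ∧ r = some v))
  allowed := fun _ _ _ => true

/-- Stack: operation `some v` is `push(v)` (returning `none`), operation `none` is
`pop()`, returning the most recently pushed value not yet popped (`some v`) or
`none` (empty). -/
def StackSpec (n : ℕ) : Spec n where
  Op := Option ℕ
  Res := Option ℕ
  State := List ℕ
  init := []
  δ := fun s _ op s' r =>
    (∃ v, op = some v ∧ s' = v :: s ∧ r = none) ∨
    (op = none ∧ ((s = [] ∧ s' = [] ∧ r = none) ∨ ∃ v t, s = v :: t ∧ s' = t ∧ r = some v))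
  allowed := fun _ _ _ => true

/-- Operations of the (one-shot or long-lived) contest objects. -/
inductive ContestOp : Type
  | compete
  | decide

/-- The one-shot contest object for `n` processes: each competitor `p_1, …, p_{n-1}`
may invoke `compete()` once, which always returns `true`; the referee `p_0` may invoke
`decide()` once, which returns the index of the first process that executed
`compete()` (`Sum.inr i`) or `false` (`Sum.inl false`) if there is no such operation. -/
def ContestSpec (n : ℕ) : Spec n where
  Op := ContestOp
  Res := Bool ⊕ ℕ
  State := Option (Fin n) × Bool
  init := (none, false)
  δ := fun s i op s' r =>
    (op = ContestOp.compete ∧ i.val ≠ 0 ∧ r = Sum.inl true ∧ s'.2 = s.2 ∧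
      s'.1 = (match s.1 with | some j => some j | none => some i)) ∨
    (op = ContestOp.decide ∧ i.val = 0 ∧ s.2 = false ∧ s' = (s.1, true) ∧
      r = (match s.1 with | some j => Sum.inr j.val | none => Sum.inl false))
  allowed := fun i hist op =>
    hist.isEmpty &&
      (match op with
       | ContestOp.compete => i.val != 0
       | ContestOp.decide => i.val == 0)

/-- The long-lived contest object for `n` processes: each competitor `p_1, …, p_{n-1}`
may invoke `compete()` any number of times (returning nothing, i.e. `none`); the
referee `p_0` may invoke `decide()` at most once, which returns `some x` for some
integer `x` such that every competitor has executed at most `x` operations so far. -/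
def LLContestSpec (n : ℕ) : Spec n where
  Op := ContestOp
  Res := Option ℕ
  State := (Fin n → ℕ) × Bool
  init := (fun _ => 0, false)
  δ := fun s i op s' r =>
    (op = ContestOp.compete ∧ i.val ≠ 0 ∧
      s' = (Function.update s.1 i (s.1 i + 1), s.2) ∧ r = none) ∨
    (op = ContestOp.decide ∧ i.val = 0 ∧ s.2 = false ∧ s'.2 = true ∧ s'.1 = s.1 ∧
      ∃ x : ℕ, r = some x ∧ ∀ j : Fin n, j.val ≠ 0 → s.1 j ≤ x)
  allowed := fun i hist op =>
    match op with
    | ContestOp.compete => i.val != 0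
    | ContestOp.decide => (i.val == 0) && hist.isEmpty

/-- Counter: operation `true` is `increment()` (returning `none`), operation `false`
is `read()`, returning the number of increments so far. -/
def CounterSpec (n : ℕ) : Spec n where
  Op := Bool
  Res := Option ℕ
  State := ℕ
  init := 0
  δ := fun s _ op s' r =>
    (op = true ∧ s' = s + 1 ∧ r = none) ∨ (op = false ∧ s' = s ∧ r = some s)
  allowed := fun _ _ _ => true

/-- Max register: operation `some v` is `maxWrite(v)` (returning `none`), operation
`none` is `maxRead()`, returning the largest value written so far. -/
def MaxRegSpec (n : ℕ) : Spec n where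
  Op := Option ℕ
  Res := Option ℕ
  State := ℕ
  init := 0
  δ := fun s _ op s' r =>
    (∃ v, op = some v ∧ s' = max s v ∧ r = none) ∨ (op = none ∧ s' = s ∧ r = some s)
  allowed := fun _ _ _ => true

/-- Snapshot with `n` components: operation `Sum.inl (j, v)` atomically updates
component `j` to `v` (returning `none`); operation `Sum.inr ()` is `scan()`,
atomically returning all components. -/
def SnapshotSpec (n : ℕ) : Spec n where
  Op := (Fin n × ℕ) ⊕ Unit
  Res := Option (Fin n → ℕ)
  State := Fin n → ℕ
  init := fun _ => 0
  δ := fun s _ op s' r =>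
    (∃ j v, op = Sum.inl (j, v) ∧ s' = Function.update s j v ∧ r = none) ∨
    (op = Sum.inr () ∧ s' = s ∧ r = some s)
  allowed := fun _ _ _ => true

/-- Fetch&increment: atomically returns the current value and increments it. -/
def FetchIncSpec (n : ℕ) : Spec n where
  Op := Unit
  Res := ℕ
  State := ℕ
  init := 0
  δ := fun s _ _ s' r => s' = s + 1 ∧ r = s
  allowed := fun _ _ _ => true

/-- Fetch&add: `fetch&add(v)` atomically returns the current value and adds `v`. -/
def FetchAddSpec (n : ℕ) : Spec n where
  Op := ℕ
  Res := ℕ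
  State := ℕ
  init := 0
  δ := fun s _ op s' r => s' = s + op ∧ r = s
  allowed := fun _ _ _ => true

/-! ## Valency machinery for the long-lived contest object -/

/-- A sequence of events involves only the competitors `p_1, …, p_{n-1}`. -/
def CompetitorsOnly {n : ℕ} {S : Spec n} (β : List (Event n S)) : Prop :=
  ∀ e ∈ β, (Event.proc e).val ≠ 0

/-- `decide()` appears in the linearization `L α` with output `x`. -/
def DecidesVal {n : ℕ}
    (L : List (Event n (LLContestSpec n)) → List (ℕ × (LLContestSpec n).Res))
    (α : List (Event n (LLContestSpec n))) (x : ℕ) : Prop :=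
  ∃ j : ℕ, ∃ i : Fin n, i.val = 0 ∧
    α[j]? = some (Event.inv i ContestOp.decide) ∧ (j, (some x : Option ℕ)) ∈ L α

/-- The competitors-valency `W(α)`: all `x` such that some finite competitors-only
extension `β` of `α` has `decide()` appearing in `L(αβ)` with output `x`. -/
def Wset {n : ℕ} {ι : Type} {M : ι → BaseObject} (A : Impl n (LLContestSpec n) ι M)
    (L : List (Event n (LLContestSpec n)) → List (ℕ × (LLContestSpec n).Res))
    (α : List (Event n (LLContestSpec n))) : Set ℕ :=
  { x | ∃ β, CompetitorsOnly β ∧ IsExec A (α ++ β) ∧ DecidesVal L (α ++ β) x }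

/-- `α` is competitors-closed: every infinite competitors-only extension of `α` has a
finite prefix `β` such that `decide()` appears in `L(αβ)`. -/
def ClosedExec {n : ℕ} {ι : Type} {M : ι → BaseObject} (A : Impl n (LLContestSpec n) ι M)
    (L : List (Event n (LLContestSpec n)) → List (ℕ × (LLContestSpec n).Res))
    (α : List (Event n (LLContestSpec n))) : Prop :=
  ∀ E : ℕ → Event n (LLContestSpec n),
    (∀ m, (Event.proc (E m)).val ≠ 0) →
    (∀ m, IsExec A (α ++ prefE E m)) →
    ∃ m x, DecidesVal L (α ++ prefE E m) x

/-- `α` is competitors-supervalent: not competitors-closed. -/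
def SupervalentExec {n : ℕ} {ι : Type} {M : ι → BaseObject}
    (A : Impl n (LLContestSpec n) ι M)
    (L : List (Event n (LLContestSpec n)) → List (ℕ × (LLContestSpec n).Res))
    (α : List (Event n (LLContestSpec n))) : Prop :=
  ¬ ClosedExec A L α

/-- The next event of process `r` in configuration `C` of an implementation of the
long-lived contest object: invoke its (unique) operation if idle, respond if the
response is ready, and otherwise take its next primitive step. -/
noncomputable def llNextEvent {n : ℕ} {ι : Type} {M : ι → BaseObject}
    (A : Impl n (LLContestSpec n) ι M) (C : Config A) (r : Fin n) :
    Event n (LLContestSpec n) :=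
  match C.pend r with
  | none => Event.inv r (if r.val = 0 then ContestOp.decide else ContestOp.compete)
  | some _ =>
    match A.ret r (C.loc r) with
    | some v => Event.res r v
    | none => Event.step r

/-- `α` extended by the next step of process `r` (written `αr` in the paper);
`α` is left unchanged if `r` has no enabled next step. -/
noncomputable def sched1 {n : ℕ} {ι : Type} {M : ι → BaseObject}
    (A : Impl n (LLContestSpec n) ι M) (α : List (Event n (LLContestSpec n)))
    (r : Fin n) : List (Event n (LLContestSpec n)) :=
  match execConfig A α with
  | none => α
  | some C =>
    match nextConfig A C (llNextEvent A C r) with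
    | none => α
    | some _ => α ++ [llNextEvent A C r]

/-- `α` extended by scheduling the listed processes, each taking its next step in
order; e.g. `sched A α [q, p]` is the execution `αqp` of the paper. -/
noncomputable def sched {n : ℕ} {ι : Type} {M : ι → BaseObject}
    (A : Impl n (LLContestSpec n) ι M) :
    List (Event n (LLContestSpec n)) → List (Fin n) → List (Event n (LLContestSpec n))
  | α, [] => α
  | α, r :: rs => sched A (sched1 A α r) rs

/-- The final configurations of executions `α` and `α'` are indistinguishable to
process `r`: all base objects have the same states, and `r` is in the same state. -/
def ExecIndistTo {n : ℕ} {S : Spec n} {ι : Type} {M : ι → BaseObject}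
    (A : Impl n S ι M) (α α' : List (Event n S)) (r : Fin n) : Prop :=
  ∃ C C', execConfig A α = some C ∧ execConfig A α' = some C' ∧
    C.mem = C'.mem ∧ C.loc r = C'.loc r ∧ C.pend r = C'.pend r ∧ C.hist r = C'.hist r

/-!
A competitor running solo from a closed execution `α` must eventually get `decide()`
linearized, so `W(α)` is nonempty.

Suppose `W(α)` contains two values. Then the referee's `decide()` is pending at `α` and every
competitors-only extension of `α` is again closed. Some one-step competitor extension of `α`
still has two values in its valency. Otherwise two steps `e₁`, `e₂` lead to different singleton
valencies. Because the base objects are registers, at most one further step by the same two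
processes leads to configurations that only one competitor `p` can tell apart: either one step
leaves the memory unchanged, or both write to the same register, or they commute. A third
competitor (this is where `n ≥ 3` is used) then runs solo until `decide()` is linearized in both
executions. The referee cannot tell them apart either, and by wait-freedom it completes
`decide()` with the same response in both, so the two valencies meet. Iterating yields an
infinite competitors-only extension of `α` along which `decide()` is never linearized,
contradicting closedness.
-/

theorem List.eq_of_countP_le_one {X : Type*} {l : List X} {p : X → Bool} (hl : l.countP p ≤ 1)
    {j j' : ℕ} {a b : X} (ha : l[j]? = some a) (hb : l[j']? = some b) (hpa : p a) (hpb : p b) :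
    j = j' := by
  wlog hjj : j < j' generalizing j j' a b
  · rcases Nat.lt_or_ge j' j with h | h
    · exact (this hb ha hpb hpa h).symm
    · omega
  have htake : 0 < (l.take j').countP p :=
    List.countP_pos_iff.2 ⟨a, List.mem_iff_getElem?.2 ⟨j, by rwa [List.getElem?_take_of_lt hjj]⟩,
      hpa⟩
  have hdrop : 0 < (l.drop j').countP p :=
    List.countP_pos_iff.2 ⟨b, List.mem_iff_getElem?.2 ⟨0, by simpa using hb⟩, hpb⟩
  have := List.countP_append (l₁ := l.take j') (l₂ := l.drop j') (p := p)
  rw [List.take_append_drop] at this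
  omega

theorem List.exists_getElem?_of_countP_pos {X : Type*} {l : List X} {p : X → Bool}
    (h : 0 < l.countP p) : ∃ (k : ℕ) (a : X), l[k]? = some a ∧ p a := by
  obtain ⟨a, ha, hpa⟩ := List.countP_pos_iff.1 h
  obtain ⟨k, hk⟩ := List.mem_iff_getElem?.1 ha
  exact ⟨k, a, hk, hpa⟩

theorem List.Forall₂.exists_of_mem_left {X Y : Type*} {R : X → Y → Prop} {l₁ : List X}
    {l₂ : List Y} (h : List.Forall₂ R l₁ l₂) {a : X} (ha : a ∈ l₁) : ∃ b ∈ l₂, R a b := by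
  induction h with
  | nil => simp at ha
  | cons hr _ ih =>
    rcases List.mem_cons.1 ha with rfl | ha
    · exact ⟨_, List.mem_cons_self, hr⟩
    · obtain ⟨b, hb, hab⟩ := ih ha
      exact ⟨b, List.mem_cons_of_mem _ hb, hab⟩

theorem List.getElem?_append_of_getElem? {X : Type*} {α β : List X} {j : ℕ} {a : X}
    (h : α[j]? = some a) : (α ++ β)[j]? = some a := by
  rw [List.getElem?_append_left (List.getElem?_eq_some_iff.1 h).1, h]

section Executions

variable {n : ℕ} {S : Spec n} {ι : Type} {M : ι → BaseObject} {A : Impl n S ι M}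

variable (A) in
noncomputable def execFrom (C : Config A) (β : List (Event n S)) : Option (Config A) :=
  β.foldlM (fun C e => nextConfig A C e) C

theorem execFrom_nil (C : Config A) : execFrom A C [] = some C := rfl

theorem execFrom_cons (C : Config A) (e : Event n S) (β : List (Event n S)) :
    execFrom A C (e :: β) = (nextConfig A C e).bind (execFrom A · β) := rfl

theorem execFrom_append (C : Config A) (β γ : List (Event n S)) :
    execFrom A C (β ++ γ) = (execFrom A C β).bind (execFrom A · γ) :=
  List.foldlM_append ..

theorem execFrom_singleton (C : Config A) (e : Event n S) :
    execFrom A C [e] = nextConfig A C e := by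
  rw [execFrom_cons]
  cases nextConfig A C e <;> rfl

theorem execConfig_append (α β : List (Event n S)) :
    execConfig A (α ++ β) = (execConfig A α).bind (execFrom A · β) :=
  execFrom_append (initConfig A) α β

theorem execConfig_snoc (α : List (Event n S)) (e : Event n S) :
    execConfig A (α ++ [e]) = (execConfig A α).bind (nextConfig A · e) := by
  simp only [execConfig_append, execFrom_singleton]

theorem execConfig_append_of_execFrom {α β : List (Event n S)} {C D : Config A}
    (hα : execConfig A α = some C) (hβ : execFrom A C β = some D) :
    execConfig A (α ++ β) = some D := by
  rw [execConfig_append, hα, Option.bind_some, hβ]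

theorem execConfig_snoc_of_nextConfig {α : List (Event n S)} {e : Event n S} {C D : Config A}
    (hα : execConfig A α = some C) (he : nextConfig A C e = some D) :
    execConfig A (α ++ [e]) = some D := by
  rw [execConfig_snoc, hα, Option.bind_some, he]

theorem isExec_of_execConfig_eq_some {α : List (Event n S)} {C : Config A}
    (h : execConfig A α = some C) : IsExec A α := by
  rw [IsExec, h]; rfl

theorem exists_execFrom_of_isExec_append {α β : List (Event n S)} {C : Config A}
    (hα : execConfig A α = some C) (h : IsExec A (α ++ β)) :
    ∃ D, execFrom A C β = some D := by
  rw [IsExec, execConfig_append, hα, Option.bind_some] at h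
  exact Option.isSome_iff_exists.1 h

theorem IsExec.of_append {α β : List (Event n S)} (h : IsExec A (α ++ β)) : IsExec A α := by
  rw [IsExec, execConfig_append] at h
  cases hα : execConfig A α with
  | none => simp [hα] at h
  | some C => exact isExec_of_execConfig_eq_some hα

theorem IsExec.of_prefix {α γ : List (Event n S)} (h : α <+: γ) (hγ : IsExec A γ) :
    IsExec A α := by
  obtain ⟨t, rfl⟩ := h
  exact hγ.of_append

theorem IsExec.exists_snoc {α : List (Event n S)} {e : Event n S} (h : IsExec A (α ++ [e])) :
    ∃ B D, execConfig A α = some B ∧ nextConfig A B e = some D := by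
  obtain ⟨D, hD⟩ := Option.isSome_iff_exists.1 h
  rw [execConfig_snoc] at hD
  obtain ⟨B, hB, hD⟩ := Option.bind_eq_some_iff.1 hD
  exact ⟨B, D, hB, hD⟩

theorem prefE_add (E : ℕ → Event n S) (m k : ℕ) :
    prefE E (m + k) = prefE E m ++ prefE (fun j => E (m + j)) k := by
  simp [prefE, List.range_add, Function.comp_def]

theorem prefE_succ (E : ℕ → Event n S) (m : ℕ) : prefE E (m + 1) = prefE E m ++ [E m] :=
  prefE_add E m 1

theorem prefE_prefix_of_le (E : ℕ → Event n S) {m m' : ℕ} (h : m ≤ m') :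
    prefE E m <+: prefE E m' := by
  obtain ⟨k, rfl⟩ := Nat.exists_eq_add_of_le h
  rw [prefE_add]
  exact List.prefix_append _ _

theorem mem_prefE {E : ℕ → Event n S} {m : ℕ} {e : Event n S} (he : e ∈ prefE E m) :
    ∃ k, E k = e := by
  obtain ⟨k, -, rfl⟩ := List.mem_map.1 he
  exact ⟨k, rfl⟩

theorem CompetitorsOnly.append {β γ : List (Event n S)} (hβ : CompetitorsOnly β)
    (hγ : CompetitorsOnly γ) : CompetitorsOnly (β ++ γ) := by
  intro e he
  rcases List.mem_append.1 he with he | he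
  exacts [hβ e he, hγ e he]

theorem competitorsOnly_of_forall_proc_eq {β : List (Event n S)} {q : Fin n}
    (hq : q.val ≠ 0) (hβ : ∀ e ∈ β, e.proc = q) : CompetitorsOnly β :=
  fun e he => hβ e he ▸ hq

theorem CompetitorsOnly.proc_ne {δ : List (Event n S)} (hδ : CompetitorsOnly δ)
    {i : Fin n} (hi : i.val = 0) : ∀ e ∈ δ, e.proc ≠ i :=
  fun e he h => hδ e he (h ▸ hi)

theorem exists_seq_of_forall_exists_snoc {P : List (Event n S) → Prop}
    {Q : Event n S → Prop} (h : ∀ γ, P γ → ∃ e, Q e ∧ P (γ ++ [e]))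
    {α : List (Event n S)} (hα : P α) :
    ∃ E : ℕ → Event n S, (∀ m, Q (E m)) ∧ ∀ m, P (α ++ prefE E m) := by
  choose f hfQ hfP using h
  let g : ℕ → {γ // P γ} :=
    fun m => Nat.rec ⟨α, hα⟩ (fun _ γ => ⟨γ.1 ++ [f γ.1 γ.2], hfP γ.1 γ.2⟩) m
  let E : ℕ → Event n S := fun m => f (g m).1 (g m).2
  have hg : ∀ m, (g m).1 = α ++ prefE E m := by
    intro m
    induction m with
    | zero => exact (List.append_nil α).symm
    | succ m ih => rw [prefE_succ, ← List.append_assoc, ← ih]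
  exact ⟨E, fun m => hfQ _ _, fun m => hg m ▸ (g m).2⟩

end Executions

def prependSeq {X : Type*} (β : List X) (E : ℕ → X) (m : ℕ) : X :=
  β.getD m (E (m - β.length))

theorem prependSeq_length_add {X : Type*} (β : List X) (E : ℕ → X) (m : ℕ) :
    prependSeq β E (β.length + m) = E m := by
  simp [prependSeq, List.getD_eq_getElem?_getD]

theorem prefE_prependSeq {n : ℕ} {S : Spec n} (β : List (Event n S)) (E : ℕ → Event n S)
    (m : ℕ) : prefE (prependSeq β E) (β.length + m) = β ++ prefE E m := by
  rw [prefE_add]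
  congr 1
  · refine List.ext_getElem (by simp [prefE]) fun k _ hk => ?_
    simp [prefE, prependSeq, List.getD_eq_getElem?_getD, hk]
  · simp [prefE, prependSeq_length_add]

section Transitions

variable {n : ℕ} {S : Spec n} {ι : Type} {M : ι → BaseObject} {A : Impl n S ι M}

theorem nextConfig_inv_spec {C D : Config A} {i : Fin n} {op : S.Op}
    (h : nextConfig A C (Event.inv i op) = some D) :
    C.pend i = none ∧ S.allowed i (C.hist i) op = true ∧ D.mem = C.mem ∧
    D.loc = Function.update C.loc i (A.invokeL i op (C.loc i)) ∧
    D.pend = Function.update C.pend i (some op) ∧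
    D.hist = Function.update C.hist i (C.hist i ++ [op]) := by
  cases hp : C.pend i with
  | some o => simp [nextConfig, hp] at h
  | none =>
    simp only [nextConfig, hp] at h
    split at h
    · cases h
      exact ⟨rfl, by assumption, rfl, rfl, rfl, rfl⟩
    · simp at h

theorem nextConfig_res_spec {C D : Config A} {i : Fin n} {r : S.Res}
    (h : nextConfig A C (Event.res i r) = some D) :
    (C.pend i).isSome ∧ A.ret i (C.loc i) = some r ∧ D.mem = C.mem ∧ D.loc = C.loc ∧
    D.pend = Function.update C.pend i none ∧ D.hist = C.hist := by
  cases hp : C.pend i with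
  | none => simp [nextConfig, hp] at h
  | some o =>
    simp only [nextConfig, hp] at h
    split at h
    · cases h
      exact ⟨rfl, by assumption, rfl, rfl, rfl, rfl⟩
    · simp at h

theorem nextConfig_step_spec {C D : Config A} {i : Fin n}
    (h : nextConfig A C (Event.step i) = some D) :
    (C.pend i).isSome ∧ A.ret i (C.loc i) = none ∧
    D.mem = updMem C.mem (A.obj i (C.loc i))
      ((M (A.obj i (C.loc i))).apply (A.prim i (C.loc i)) (C.mem (A.obj i (C.loc i)))).1 ∧
    D.loc = Function.update C.loc i (A.updL i (C.loc i)
      ((M (A.obj i (C.loc i))).apply (A.prim i (C.loc i)) (C.mem (A.obj i (C.loc i)))).2) ∧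
    D.pend = C.pend ∧ D.hist = C.hist := by
  cases hp : C.pend i with
  | none => simp [nextConfig, hp] at h
  | some o =>
    simp only [nextConfig, hp] at h
    split at h
    · cases h
      exact ⟨rfl, by assumption, rfl, rfl, rfl, rfl⟩
    · simp at h

theorem nextConfig_inv_isSome {C : Config A} {i : Fin n} {op : S.Op}
    (hp : C.pend i = none) (hall : S.allowed i (C.hist i) op = true) :
    (nextConfig A C (Event.inv i op)).isSome := by
  simp [nextConfig, hp, hall]

theorem nextConfig_res_isSome {C : Config A} {i : Fin n} {r : S.Res}
    (hp : (C.pend i).isSome) (hret : A.ret i (C.loc i) = some r) :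
    (nextConfig A C (Event.res i r)).isSome := by
  obtain ⟨op, hp⟩ := Option.isSome_iff_exists.1 hp
  simp [nextConfig, hp, hret]

theorem nextConfig_step_isSome {C : Config A} {i : Fin n}
    (hp : (C.pend i).isSome) (hret : A.ret i (C.loc i) = none) :
    (nextConfig A C (Event.step i)).isSome := by
  obtain ⟨op, hp⟩ := Option.isSome_iff_exists.1 hp
  simp [nextConfig, hp, hret]

def AgreeAt (j : Fin n) (C D : Config A) : Prop :=
  C.loc j = D.loc j ∧ C.pend j = D.pend j ∧ C.hist j = D.hist j

theorem AgreeAt.symm {j : Fin n} {C D : Config A} (h : AgreeAt j C D) : AgreeAt j D C :=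
  ⟨h.1.symm, h.2.1.symm, h.2.2.symm⟩

theorem AgreeAt.trans {j : Fin n} {C D E : Config A} (h : AgreeAt j C D) (h' : AgreeAt j D E) :
    AgreeAt j C E :=
  ⟨h.1.trans h'.1, h.2.1.trans h'.2.1, h.2.2.trans h'.2.2⟩

theorem nextConfig_agreeAt_of_ne {C D : Config A} {e : Event n S}
    (h : nextConfig A C e = some D) {j : Fin n} (hj : j ≠ e.proc) : AgreeAt j D C := by
  cases e <;> simp only [Event.proc] at hj
  all_goals first
    | obtain ⟨-, -, -, hl, hp, hh⟩ := nextConfig_inv_spec h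
      simp [AgreeAt, hl, hp, hh, Function.update_of_ne hj]
    | obtain ⟨-, -, -, hl, hp, hh⟩ := nextConfig_res_spec h
      simp [AgreeAt, hl, hp, hh, Function.update_of_ne hj]
    | obtain ⟨-, -, -, hl, hp, hh⟩ := nextConfig_step_spec h
      simp [AgreeAt, hl, hp, hh, Function.update_of_ne hj]

theorem execFrom_agreeAt_of_forall_ne {C D : Config A} {β : List (Event n S)}
    (h : execFrom A C β = some D) {j : Fin n} (hβ : ∀ e ∈ β, e.proc ≠ j) :
    AgreeAt j D C := by
  induction β generalizing C with
  | nil => cases h; exact ⟨rfl, rfl, rfl⟩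
  | cons e β ih =>
    rw [execFrom_cons] at h
    obtain ⟨C₁, hC₁, h⟩ := Option.bind_eq_some_iff.1 h
    exact (ih h fun e he => hβ e (List.mem_cons_of_mem _ he)).trans
      (nextConfig_agreeAt_of_ne hC₁ (hβ e List.mem_cons_self).symm)

theorem nextConfig_congr {C C' D : Config A} {e : Event n S}
    (h : nextConfig A C e = some D) (hmem : C.mem = C'.mem) (hag : AgreeAt e.proc C C') :
    ∃ D', nextConfig A C' e = some D' ∧ D.mem = D'.mem ∧ AgreeAt e.proc D D' := by
  cases e <;> simp only [Event.proc] at hag ⊢ <;> obtain ⟨hl, hp, hh⟩ := hag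
  case inv i op =>
    obtain ⟨hpend, hall, hDm, hDl, hDp, hDh⟩ := nextConfig_inv_spec h
    obtain ⟨D', hD'⟩ := Option.isSome_iff_exists.1
      (nextConfig_inv_isSome (hp ▸ hpend) (hh ▸ hall) (A := A))
    obtain ⟨-, -, hDm', hDl', hDp', hDh'⟩ := nextConfig_inv_spec hD'
    exact ⟨D', hD', by rw [hDm, hDm', hmem], by simp_all [AgreeAt]⟩
  case res i r =>
    obtain ⟨hpend, hret, hDm, hDl, hDp, hDh⟩ := nextConfig_res_spec h
    obtain ⟨D', hD'⟩ := Option.isSome_iff_exists.1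
      (nextConfig_res_isSome (hp ▸ hpend) (hl ▸ hret) (A := A))
    obtain ⟨-, -, hDm', hDl', hDp', hDh'⟩ := nextConfig_res_spec hD'
    exact ⟨D', hD', by rw [hDm, hDm', hmem], by simp_all [AgreeAt]⟩
  case step i =>
    obtain ⟨hpend, hret, hDm, hDl, hDp, hDh⟩ := nextConfig_step_spec h
    obtain ⟨D', hD'⟩ := Option.isSome_iff_exists.1
      (nextConfig_step_isSome (hp ▸ hpend) (hl ▸ hret) (A := A))
    obtain ⟨-, -, hDm', hDl', hDp', hDh'⟩ := nextConfig_step_spec hD'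
    rw [hmem, hl] at hDm hDl
    exact ⟨D', hD', hDm.trans hDm'.symm, by simp [AgreeAt, hDl, hDl', hDp, hDp', hDh, hDh', hp, hh]⟩

def AgreeExc (p : Fin n) (C D : Config A) : Prop :=
  C.mem = D.mem ∧ ∀ j, j ≠ p → AgreeAt j C D

theorem AgreeExc.symm {p : Fin n} {C D : Config A} (h : AgreeExc p C D) : AgreeExc p D C :=
  ⟨h.1.symm, fun j hj => (h.2 j hj).symm⟩

theorem AgreeExc.nextConfig {p : Fin n} {C C' D : Config A} {e : Event n S}
    (hag : AgreeExc p C C') (h : nextConfig A C e = some D) (hep : e.proc ≠ p) :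
    ∃ D', nextConfig A C' e = some D' ∧ AgreeExc p D D' := by
  obtain ⟨D', hD', hmem, hagi⟩ := nextConfig_congr h hag.1 (hag.2 _ hep)
  refine ⟨D', hD', hmem, fun j hj => ?_⟩
  by_cases hje : j = e.proc
  · exact hje ▸ hagi
  · exact (nextConfig_agreeAt_of_ne h hje).trans
      ((hag.2 j hj).trans (nextConfig_agreeAt_of_ne hD' hje).symm)

theorem AgreeExc.execFrom {p : Fin n} {C C' D : Config A} {β : List (Event n S)}
    (hag : AgreeExc p C C') (h : execFrom A C β = some D) (hβ : ∀ e ∈ β, e.proc ≠ p) :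
    ∃ D', execFrom A C' β = some D' ∧ AgreeExc p D D' := by
  induction β generalizing C C' with
  | nil => cases h; exact ⟨C', rfl, hag⟩
  | cons e β ih =>
    rw [execFrom_cons] at h
    obtain ⟨C₁, hC₁, h⟩ := Option.bind_eq_some_iff.1 h
    obtain ⟨C₁', hC₁', hag₁⟩ := hag.nextConfig hC₁ (hβ e List.mem_cons_self)
    obtain ⟨D', hD', hagD⟩ := ih hag₁ h fun e he => hβ e (List.mem_cons_of_mem _ he)
    exact ⟨D', by rw [execFrom_cons, hC₁', Option.bind_some, hD'], hagD⟩

theorem agreeAt_of_execConfig_append {η δ : List (Event n S)} {C D : Config A}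
    (hC : execConfig A η = some C) (hD : execConfig A (η ++ δ) = some D)
    {j : Fin n} (hδ : ∀ e ∈ δ, e.proc ≠ j) : AgreeAt j D C := by
  rw [execConfig_append, hC, Option.bind_some] at hD
  exact execFrom_agreeAt_of_forall_ne hD hδ

theorem exists_agreeExc_of_mem_eq {C D₁ D₂ : Config A} {e₁ e₂ : Event n S}
    (hD₁ : nextConfig A C e₁ = some D₁) (hmem : D₁.mem = C.mem)
    (hD₂ : nextConfig A C e₂ = some D₂) (hne : e₂.proc ≠ e₁.proc) :
    ∃ D₁₂, nextConfig A D₁ e₂ = some D₁₂ ∧ AgreeExc e₁.proc D₁₂ D₂ := by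
  have hag : AgreeExc e₁.proc C D₁ :=
    ⟨hmem.symm, fun j hj => (nextConfig_agreeAt_of_ne hD₁ hj).symm⟩
  obtain ⟨D₁₂, hD₁₂, hagD⟩ := hag.nextConfig hD₂ hne
  exact ⟨D₁₂, hD₁₂, hagD.symm⟩

end Transitions

section ProcessCounts

variable {n : ℕ} {S : Spec n} {ι : Type} {M : ι → BaseObject} {A : Impl n S ι M}

def Event.isInvBy (i : Fin n) : Event n S → Bool
  | .inv j _ => j == i
  | _ => false

def Event.isResBy (i : Fin n) : Event n S → Bool
  | .res j _ => j == i
  | _ => false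

theorem nextConfig_hist_length {C D : Config A} {e : Event n S}
    (h : nextConfig A C e = some D) (i : Fin n) :
    (D.hist i).length = (C.hist i).length + if e.isInvBy i then 1 else 0 := by
  cases e with
  | inv j op =>
    obtain ⟨-, -, -, -, -, hh⟩ := nextConfig_inv_spec h
    by_cases hji : j = i
    · subst hji; simp [hh, Event.isInvBy]
    · simp [hh, Event.isInvBy, hji, Function.update_of_ne (Ne.symm hji)]
  | res j r => simp [(nextConfig_res_spec h).2.2.2.2.2, Event.isInvBy]
  | step j => simp [(nextConfig_step_spec h).2.2.2.2.2, Event.isInvBy]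

theorem nextConfig_pend_count {C D : Config A} {e : Event n S}
    (h : nextConfig A C e = some D) (i : Fin n) :
    (if e.isResBy i then 1 else 0) + (if (D.pend i).isSome then 1 else 0) =
      (if (C.pend i).isSome then 1 else 0) + if e.isInvBy i then 1 else 0 := by
  cases e with
  | inv j op =>
    obtain ⟨hpend, -, -, -, hp, -⟩ := nextConfig_inv_spec h
    by_cases hji : j = i
    · subst hji; simp [hp, hpend, Event.isInvBy, Event.isResBy]
    · simp [hp, Event.isInvBy, Event.isResBy, hji, Function.update_of_ne (Ne.symm hji)]
  | res j r =>
    obtain ⟨hpend, -, -, -, hp, -⟩ := nextConfig_res_spec h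
    by_cases hji : j = i
    · subst hji; simp [hp, hpend, Event.isInvBy, Event.isResBy]
    · simp [hp, Event.isInvBy, Event.isResBy, hji, Function.update_of_ne (Ne.symm hji)]
  | step j => simp [(nextConfig_step_spec h).2.2.2.2.1, Event.isInvBy, Event.isResBy]

theorem execConfig_counts {η : List (Event n S)} {C : Config A}
    (h : execConfig A η = some C) (i : Fin n) :
    (C.hist i).length = η.countP (·.isInvBy i) ∧
    η.countP (·.isResBy i) + (if (C.pend i).isSome then 1 else 0) =
      η.countP (·.isInvBy i) := by
  induction η using List.reverseRecOn generalizing C with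
  | nil => cases h; simp [initConfig]
  | append_singleton η e ih =>
    rw [execConfig_snoc] at h
    obtain ⟨B, hB, h⟩ := Option.bind_eq_some_iff.1 h
    obtain ⟨ih₁, ih₂⟩ := ih hB
    have h₁ := nextConfig_hist_length h i
    have h₂ := nextConfig_pend_count h i
    simp only [List.countP_append, List.countP_singleton]
    omega

theorem exists_inv_lt_of_res {η : List (Event n S)} (hη : IsExec A η) {k : ℕ} {i : Fin n}
    {r : S.Res} (hk : η[k]? = some (Event.res i r)) :
    ∃ j op, j < k ∧ η[j]? = some (Event.inv i op) := by
  have htake : η.take (k + 1) = η.take k ++ [Event.res i r] := by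
    rw [List.take_add_one, hk]; rfl
  have hex := hη.of_prefix (List.take_prefix (k + 1) η)
  rw [htake] at hex
  obtain ⟨B, D, hB, hD⟩ := hex.exists_snoc
  have hcount := (execConfig_counts hB i).2
  rw [if_pos (nextConfig_res_spec hD).1] at hcount
  obtain ⟨j, e, hj, he⟩ :=
    List.exists_getElem?_of_countP_pos (p := (·.isInvBy i)) (l := η.take k) (by omega)
  have hjk : j < k := by
    have := (List.getElem?_eq_some_iff.1 hj).1
    simp at this
    omega
  rw [List.getElem?_take_of_lt hjk] at hj
  cases e with
  | inv j' op =>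
    simp only [Event.isInvBy, beq_iff_eq] at he
    exact ⟨j, op, hjk, he ▸ hj⟩
  | res => simp [Event.isInvBy] at he
  | step => simp [Event.isInvBy] at he

end ProcessCounts

section WaitFree

variable {n : ℕ} {S : Spec n} {ι : Type} {M : ι → BaseObject} {A : Impl n S ι M}

theorem execFrom_replicate_step_pend {C D : Config A} {i : Fin n} {k : ℕ}
    (h : execFrom A C (List.replicate k (Event.step i)) = some D) : D.pend = C.pend := by
  induction k generalizing C with
  | zero => cases h; rfl
  | succ k ih =>
    rw [List.replicate_succ, execFrom_cons] at h
    obtain ⟨C₁, hC₁, h⟩ := Option.bind_eq_some_iff.1 h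
    exact (ih h).trans (nextConfig_step_spec hC₁).2.2.2.2.1

theorem WaitFree.exists_not_isExec_steps (hwf : WaitFree A) (η : List (Event n S)) (i : Fin n) :
    ∃ k, ¬ IsExec A (η ++ List.replicate k (Event.step i)) := by
  by_contra! h
  let E := prependSeq η fun _ => Event.step i
  have hpref : ∀ m, prefE E (η.length + m) = η ++ List.replicate m (Event.step i) := fun m => by
    rw [prefE_prependSeq]; simp [prefE, List.map_const']
  have hstep : ∀ m, E (η.length + m) = Event.step i := prependSeq_length_add η _
  obtain ⟨m', hm', r, hr⟩ := hwf E
    (fun m => (h m).of_prefix (hpref m ▸ prefE_prefix_of_le E (Nat.le_add_left m _)))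
    i (fun m => ⟨η.length + m, by omega, hstep m⟩) η.length
  obtain ⟨m, rfl⟩ := Nat.exists_eq_add_of_le hm'
  exact absurd (hr.symm.trans (hstep m)) (by simp)

theorem WaitFree.exists_res (hwf : WaitFree A) {η : List (Event n S)} {C : Config A}
    (hC : execConfig A η = some C) {i : Fin n} (hpend : (C.pend i).isSome) :
    ∃ k r, IsExec A (η ++ (List.replicate k (Event.step i) ++ [Event.res i r])) := by
  classical
  have hfail := hwf.exists_not_isExec_steps η i
  obtain ⟨k, hk⟩ : ∃ k, Nat.find hfail = k + 1 :=
    Nat.exists_eq_succ_of_ne_zero fun h0 => by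
      have := Nat.find_spec hfail
      rw [h0] at this
      exact this (by simpa using isExec_of_execConfig_eq_some hC)
  have hexk : IsExec A (η ++ List.replicate k (Event.step i)) :=
    not_not.1 (Nat.find_min hfail (by omega))
  obtain ⟨D, hD⟩ := exists_execFrom_of_isExec_append hC hexk
  have hDpend : (D.pend i).isSome := by rw [execFrom_replicate_step_pend hD]; exact hpend
  have hDk : execConfig A (η ++ List.replicate k (Event.step i)) = some D :=
    execConfig_append_of_execFrom hC hD
  have hret : A.ret i (D.loc i) ≠ none := fun hret => by
    apply hk ▸ Nat.find_spec hfail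
    rw [List.replicate_succ', ← List.append_assoc, IsExec, execConfig_snoc, hDk]
    exact nextConfig_step_isSome hDpend hret
  obtain ⟨r, hr⟩ := Option.ne_none_iff_exists'.1 hret
  refine ⟨k, r, ?_⟩
  rw [← List.append_assoc, IsExec, execConfig_snoc, hDk]
  exact nextConfig_res_isSome hDpend hr

end WaitFree

section Referee

variable {n : ℕ} {ι : Type} {M : ι → BaseObject} {A : Impl n (LLContestSpec n) ι M}

theorem llNextEvent_proc (C : Config A) (r : Fin n) : (llNextEvent A C r).proc = r := by
  unfold llNextEvent
  cases C.pend r with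
  | none => rfl
  | some op => cases A.ret r (C.loc r) <;> rfl

theorem nextConfig_llNextEvent_isSome {C : Config A} {r : Fin n} (hr : r.val ≠ 0) :
    (nextConfig A C (llNextEvent A C r)).isSome := by
  unfold llNextEvent
  cases hp : C.pend r with
  | none =>
    exact nextConfig_inv_isSome hp (by simp [LLContestSpec, hr])
  | some op =>
    have hp' : (C.pend r).isSome := by rw [hp]; rfl
    cases hret : A.ret r (C.loc r) with
    | some v => exact nextConfig_res_isSome hp' hret
    | none => exact nextConfig_step_isSome hp' hret

theorem eq_llNextEvent_of_nextConfig {C D : Config A} {e : Event n (LLContestSpec n)}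
    (h : nextConfig A C e = some D) : e = llNextEvent A C e.proc := by
  cases e with
  | inv i op =>
    obtain ⟨hp, hall, -⟩ := nextConfig_inv_spec h
    cases op <;> simp_all [LLContestSpec, llNextEvent, Event.proc]
  | res i r =>
    obtain ⟨hp, hret, -⟩ := nextConfig_res_spec h
    obtain ⟨op, hp⟩ := Option.isSome_iff_exists.1 hp
    simp [llNextEvent, Event.proc, hp, hret]
  | step i =>
    obtain ⟨hp, hret, -⟩ := nextConfig_step_spec h
    obtain ⟨op, hp⟩ := Option.isSome_iff_exists.1 hp
    simp [llNextEvent, Event.proc, hp, hret]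

theorem hist_length_le_one_of_referee {η : List (Event n (LLContestSpec n))} {C : Config A}
    (h : execConfig A η = some C) {i : Fin n} (hi : i.val = 0) : (C.hist i).length ≤ 1 := by
  induction η using List.reverseRecOn generalizing C with
  | nil => cases h; simp [initConfig]
  | append_singleton η e ih =>
    rw [execConfig_snoc] at h
    obtain ⟨B, hB, h⟩ := Option.bind_eq_some_iff.1 h
    rw [nextConfig_hist_length h]
    cases e with
    | inv j op =>
      by_cases hji : j = i
      · subst hji
        obtain ⟨-, hall, -⟩ := nextConfig_inv_spec h
        cases op <;> simp_all [LLContestSpec, Event.isInvBy]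
      · simpa [Event.isInvBy, hji] using ih hB
    | res => simpa [Event.isInvBy] using ih hB
    | step => simpa [Event.isInvBy] using ih hB

theorem countP_isInvBy_le_one {η : List (Event n (LLContestSpec n))} (hη : IsExec A η)
    {i : Fin n} (hi : i.val = 0) : η.countP (·.isInvBy i) ≤ 1 := by
  obtain ⟨C, hC⟩ := Option.isSome_iff_exists.1 hη
  exact (execConfig_counts hC i).1 ▸ hist_length_le_one_of_referee hC hi

theorem referee_inv_unique {η : List (Event n (LLContestSpec n))} (hη : IsExec A η)
    {i : Fin n} (hi : i.val = 0) {j j' : ℕ} {op op' : ContestOp}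
    (hj : η[j]? = some (Event.inv i op)) (hj' : η[j']? = some (Event.inv i op')) : j = j' :=
  List.eq_of_countP_le_one (countP_isInvBy_le_one hη hi) hj hj' (by simp [Event.isInvBy])
    (by simp [Event.isInvBy])

theorem referee_res_unique {η : List (Event n (LLContestSpec n))} (hη : IsExec A η)
    {i : Fin n} (hi : i.val = 0) {k k' : ℕ} {r r' : Option ℕ}
    (hk : η[k]? = some (Event.res i r)) (hk' : η[k']? = some (Event.res i r')) : k = k' := by
  obtain ⟨C, hC⟩ := Option.isSome_iff_exists.1 hη
  have hcount := (execConfig_counts hC i).2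
  have hle := countP_isInvBy_le_one hη hi
  exact List.eq_of_countP_le_one (p := (·.isResBy i)) (by split at hcount <;> omega) hk hk'
    (by simp [Event.isResBy]) (by simp [Event.isResBy])

theorem matches_of_referee {η : List (Event n (LLContestSpec n))} (hη : IsExec A η)
    {i : Fin n} (hi : i.val = 0) {j k : ℕ} {op : ContestOp} {r : Option ℕ} (hjk : j < k)
    (hj : η[j]? = some (Event.inv i op)) (hk : η[k]? = some (Event.res i r)) :
    Matches η j k r :=
  ⟨i, op, hj, hk, hjk, fun _ _ hmk _ hm => absurd (referee_res_unique hη hi hm hk) hmk.ne⟩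

theorem exists_res_of_referee_pend_eq_none {η : List (Event n (LLContestSpec n))}
    {C : Config A} (hC : execConfig A η = some C) {i : Fin n} (hi : i.val = 0)
    (hpend : C.pend i = none) {j : ℕ} {op : ContestOp} (hj : η[j]? = some (Event.inv i op)) :
    ∃ k r, j < k ∧ η[k]? = some (Event.res i r) := by
  have hη := isExec_of_execConfig_eq_some hC
  have hcount := (execConfig_counts hC i).2
  have hinv : 0 < η.countP (·.isInvBy i) :=
    List.countP_pos_iff.2 ⟨_, List.mem_iff_getElem?.2 ⟨j, hj⟩, by simp [Event.isInvBy]⟩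
  rw [hpend] at hcount
  obtain ⟨k, e, hk, he⟩ :=
    List.exists_getElem?_of_countP_pos (p := (·.isResBy i)) (l := η) (by simp at hcount; omega)
  cases e with
  | res i' r =>
    simp only [Event.isResBy, beq_iff_eq] at he
    subst he
    obtain ⟨j', op', hj'k, hj'⟩ := exists_inv_lt_of_res hη hk
    exact ⟨k, r, referee_inv_unique hη hi hj hj' ▸ hj'k, hk⟩
  | inv => simp [Event.isResBy] at he
  | step => simp [Event.isResBy] at he

end Referee

theorem SeqRun.exists_step_of_mem {n : ℕ} {S : Spec n} {s : S.State}
    {l : List (Fin n × S.Op × S.Res)} (h : SeqRun S s l) {e : Fin n × S.Op × S.Res}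
    (he : e ∈ l) : ∃ s₁ s₂, S.δ s₁ e.1 e.2.1 s₂ e.2.2 := by
  induction h with
  | nil => simp at he
  | cons hδ _ ih =>
    rcases List.mem_cons.1 he with rfl | he
    · exact ⟨_, _, hδ⟩
    · exact ih he

section Valency

variable {n : ℕ} {ι : Type} {M : ι → BaseObject} {A : Impl n (LLContestSpec n) ι M}
  {L : List (Event n (LLContestSpec n)) → List (ℕ × (LLContestSpec n).Res)}

theorem PrefixClosedLin.mem_append (hL : PrefixClosedLin A L)
    {α β : List (Event n (LLContestSpec n))} (hαβ : IsExec A (α ++ β))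
    {x : ℕ × Option ℕ} (hx : x ∈ L α) : x ∈ L (α ++ β) := by
  obtain ⟨t, ht⟩ := hL α β hαβ
  exact ht ▸ List.mem_append_left t hx

theorem IsLinFun.res_unique (hLin : IsLinFun A L) {η : List (Event n (LLContestSpec n))}
    (hη : IsExec A η) {j : ℕ} {r r' : Option ℕ} (hr : (j, r) ∈ L η) (hr' : (j, r') ∈ L η) :
    r = r' :=
  congrArg Prod.snd (List.inj_on_of_nodup_map (hLin η hη).nodup hr hr' rfl)

theorem IsLinFun.exists_some_of_decide (hLin : IsLinFun A L)
    {η : List (Event n (LLContestSpec n))} (hη : IsExec A η) {j : ℕ} {i : Fin n}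
    (hj : η[j]? = some (Event.inv i ContestOp.decide)) {r : Option ℕ} (hr : (j, r) ∈ L η) :
    ∃ x : ℕ, r = some x := by
  obtain ⟨l, hl, hrun⟩ := (hLin η hη).valid
  obtain ⟨e, he, hinv, hre⟩ := hl.exists_of_mem_left hr
  rw [hj] at hinv
  obtain ⟨-, hop⟩ := Event.inv.inj (Option.some.inj hinv)
  obtain ⟨s₁, s₂, hδ⟩ := hrun.exists_step_of_mem he
  rcases hδ with ⟨hcomp, -⟩ | ⟨-, -, -, -, -, x, hx, -⟩
  · exact absurd (hop.trans hcomp) ContestOp.noConfusion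
  · exact ⟨x, hre.trans hx⟩

theorem DecidesVal.of_prefix (hL : PrefixClosedLin A L)
    {η η' : List (Event n (LLContestSpec n))} {x : ℕ} (h : DecidesVal L η x) (hη : η <+: η')
    (hη' : IsExec A η') : DecidesVal L η' x := by
  obtain ⟨δ, rfl⟩ := hη
  obtain ⟨j, i, hi, hj, hmem⟩ := h
  exact ⟨j, i, hi, List.getElem?_append_of_getElem? hj, hL.mem_append hη' hmem⟩

theorem decide_pos_of_competitorsOnly {η β : List (Event n (LLContestSpec n))}
    (hβ : CompetitorsOnly β) {j : ℕ} {i : Fin n} (hi : i.val = 0) {op : ContestOp}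
    (hj : (η ++ β)[j]? = some (Event.inv i op)) : η[j]? = some (Event.inv i op) := by
  rw [List.getElem?_append] at hj
  split_ifs at hj with hlt
  · exact hj
  · exact absurd hi (hβ _ (List.mem_of_getElem? hj))

theorem Wset_append_subset {α γ : List (Event n (LLContestSpec n))} (hγ : CompetitorsOnly γ) :
    Wset A L (α ++ γ) ⊆ Wset A L α := by
  rintro x ⟨β, hβ, hex, hdec⟩
  rw [List.append_assoc] at hex hdec
  exact ⟨γ ++ β, hγ.append hβ, hex, hdec⟩

theorem Wset_append_cons_subset {α δ : List (Event n (LLContestSpec n))}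
    {e : Event n (LLContestSpec n)} (hco : CompetitorsOnly (e :: δ)) :
    Wset A L (α ++ e :: δ) ⊆ Wset A L (α ++ [e]) := by
  rw [← List.singleton_append, ← List.append_assoc]
  exact Wset_append_subset fun e he => hco e (List.mem_cons_of_mem _ he)

theorem Wset_subset_singleton_of_decidesVal (hLin : IsLinFun A L) (hL : PrefixClosedLin A L)
    {η : List (Event n (LLContestSpec n))} {x : ℕ} (h : DecidesVal L η x) :
    Wset A L η ⊆ {x} := by
  obtain ⟨j, i, hi, hj, hmem⟩ := h
  rintro y ⟨β, -, hex, j', i', hi', hj', hmem'⟩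
  obtain rfl : i' = i := Fin.ext (hi'.trans hi.symm)
  obtain rfl : j' = j := referee_inv_unique hex hi hj' (List.getElem?_append_of_getElem? hj)
  exact Option.some.inj (hLin.res_unique hex hmem' (hL.mem_append hex hmem))

theorem not_decidesVal_of_nontrivial (hLin : IsLinFun A L) (hL : PrefixClosedLin A L)
    {η : List (Event n (LLContestSpec n))} (hW : (Wset A L η).Nontrivial) (x : ℕ) :
    ¬ DecidesVal L η x :=
  fun h => hW.not_subset_singleton (Wset_subset_singleton_of_decidesVal hLin hL h)

theorem referee_pend_isSome_of_nontrivial (hLin : IsLinFun A L) (hL : PrefixClosedLin A L)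
    {η : List (Event n (LLContestSpec n))} {C : Config A} (hC : execConfig A η = some C)
    (hW : (Wset A L η).Nontrivial) {i : Fin n} (hi : i.val = 0) : (C.pend i).isSome := by
  have hη := isExec_of_execConfig_eq_some hC
  obtain ⟨x, ⟨β, hβ, -, j, i', hi', hj, -⟩, -⟩ := id hW
  obtain rfl : i' = i := Fin.ext (hi'.trans hi.symm)
  have hj := decide_pos_of_competitorsOnly hβ hi' hj
  rw [Option.isSome_iff_ne_none]
  intro hpend
  obtain ⟨k, r, hjk, hk⟩ := exists_res_of_referee_pend_eq_none hC hi' hpend hj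
  have hr := (hLin η hη).complete_mem j k r (matches_of_referee hη hi' hjk hj hk)
  obtain ⟨v, rfl⟩ := hLin.exists_some_of_decide hη hj hr
  exact not_decidesVal_of_nontrivial hLin hL hW v ⟨j, i', hi', hj, hr⟩

theorem exists_nextConfig_mem_Wset_snoc (hLin : IsLinFun A L) (hL : PrefixClosedLin A L)
    {α : List (Event n (LLContestSpec n))} {C : Config A} (hC : execConfig A α = some C)
    (hW : (Wset A L α).Nontrivial) {x : ℕ} (hx : x ∈ Wset A L α) :
    ∃ e D, e.proc.val ≠ 0 ∧ nextConfig A C e = some D ∧ x ∈ Wset A L (α ++ [e]) := by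
  obtain ⟨β, hβ, hex, hdec⟩ := hx
  cases β with
  | nil => exact absurd (by simpa using hdec) (not_decidesVal_of_nontrivial hLin hL hW x)
  | cons e t =>
    have hexe : IsExec A (α ++ [e]) := hex.of_prefix (by simp)
    obtain ⟨C', D, hC', hD⟩ := hexe.exists_snoc
    obtain rfl : C' = C := Option.some.inj (hC'.symm.trans hC)
    refine ⟨e, D, hβ e List.mem_cons_self, hD, t, fun e he => hβ e (List.mem_cons_of_mem _ he),
      ?_, ?_⟩
    · simpa using hex
    · simpa using hdec

end Valency

section Closed

variable {n : ℕ} {ι : Type} {M : ι → BaseObject} {A : Impl n (LLContestSpec n) ι M}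
  {L : List (Event n (LLContestSpec n)) → List (ℕ × (LLContestSpec n).Res)}

theorem ClosedExec.append (hL : PrefixClosedLin A L) {α β : List (Event n (LLContestSpec n))}
    (hcl : ClosedExec A L α) (hβ : CompetitorsOnly β) : ClosedExec A L (α ++ β) := by
  intro E hE hexec
  have hpref : ∀ m, prefE (prependSeq β E) m <+: β ++ prefE E m := fun m =>
    prefE_prependSeq β E m ▸ prefE_prefix_of_le _ (Nat.le_add_left m β.length)
  have hpref' : ∀ m, α ++ prefE (prependSeq β E) m <+: α ++ β ++ prefE E m := fun m => by
    rw [List.append_assoc]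
    exact (List.prefix_append_right_inj α).2 (hpref m)
  have hco : ∀ m, CompetitorsOnly (β ++ prefE E m) := fun m =>
    hβ.append fun e he => by obtain ⟨k, rfl⟩ := mem_prefE he; exact hE k
  obtain ⟨m, x, hx⟩ := hcl (prependSeq β E)
    (fun m => hco (m + 1) _ ((hpref (m + 1)).subset (by simp [prefE_succ])))
    (fun m => (hexec m).of_prefix (hpref' m))
  exact ⟨m, x, hx.of_prefix hL (hpref' m) (hexec m)⟩

theorem IsExec.exists_snoc_proc_eq {γ : List (Event n (LLContestSpec n))} (hγ : IsExec A γ)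
    {q : Fin n} (hq : q.val ≠ 0) :
    ∃ e : Event n (LLContestSpec n), e.proc = q ∧ IsExec A (γ ++ [e]) := by
  obtain ⟨C, hC⟩ := Option.isSome_iff_exists.1 hγ
  refine ⟨llNextEvent A C q, llNextEvent_proc C q, ?_⟩
  rw [IsExec, execConfig_snoc, hC, Option.bind_some]
  exact nextConfig_llNextEvent_isSome hq

theorem ClosedExec.exists_solo_decidesVal {α : List (Event n (LLContestSpec n))}
    (hcl : ClosedExec A L α) (hα : IsExec A α) {q : Fin n} (hq : q.val ≠ 0) :
    ∃ δ x, (∀ e ∈ δ, e.proc = q) ∧ IsExec A (α ++ δ) ∧ DecidesVal L (α ++ δ) x := by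
  obtain ⟨E, hEq, hEx⟩ := exists_seq_of_forall_exists_snoc (P := IsExec A)
    (Q := fun e => e.proc = q) (fun _ hγ => hγ.exists_snoc_proc_eq hq) hα
  obtain ⟨m, x, hx⟩ := hcl E (fun m => hEq m ▸ hq) hEx
  exact ⟨prefE E m, x, fun e he => by obtain ⟨k, rfl⟩ := mem_prefE he; exact hEq k, hEx m, hx⟩

theorem ClosedExec.Wset_nonempty {α : List (Event n (LLContestSpec n))} (hcl : ClosedExec A L α)
    (hα : IsExec A α) {q : Fin n} (hq : q.val ≠ 0) : (Wset A L α).Nonempty := by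
  obtain ⟨δ, x, hδ, hex, hx⟩ := hcl.exists_solo_decidesVal hα hq
  exact ⟨x, δ, competitorsOnly_of_forall_proc_eq hq hδ, hex, hx⟩

end Closed

section Indistinguishability

variable {n : ℕ} {ι : Type} {M : ι → BaseObject} {A : Impl n (LLContestSpec n) ι M}
  {L : List (Event n (LLContestSpec n)) → List (ℕ × (LLContestSpec n).Res)}

theorem exists_competitor_ne (hn : 3 ≤ n) (p : Fin n) : ∃ q : Fin n, q.val ≠ 0 ∧ q ≠ p := by
  by_cases hp : p.val = 1
  · exact ⟨⟨2, by omega⟩, by simp, fun h => by simp [← h] at hp⟩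
  · exact ⟨⟨1, by omega⟩, by simp, fun h => hp (by simp [← h])⟩

theorem decidesVal_eq_of_res_mem (hLin : IsLinFun A L) (hL : PrefixClosedLin A L)
    {ξ γ : List (Event n (LLContestSpec n))} (hex : IsExec A (ξ ++ γ)) {i : Fin n}
    (hi : i.val = 0) {r : Option ℕ} (hr : Event.res i r ∈ γ) {x : ℕ} (hx : DecidesVal L ξ x) :
    r = some x := by
  obtain ⟨j, i', hi', hj, hmem⟩ := hx
  obtain rfl : i' = i := Fin.ext (hi'.trans hi.symm)
  obtain ⟨k, hk⟩ := List.mem_iff_getElem?.1 hr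
  have hjlt := (List.getElem?_eq_some_iff.1 hj).1
  have hres : (ξ ++ γ)[ξ.length + k]? = some (Event.res i' r) := by
    rwa [List.getElem?_append_right (by omega), Nat.add_sub_cancel_left]
  have hmatch := matches_of_referee hex hi' (by omega) (List.getElem?_append_of_getElem? hj) hres
  exact hLin.res_unique hex ((hLin _ hex).complete_mem _ _ _ hmatch) (hL.mem_append hex hmem)

theorem eq_of_decidesVal_of_agreeExc (hwf : WaitFree A) (hLin : IsLinFun A L)
    (hL : PrefixClosedLin A L) {ξ₁ ξ₂ : List (Event n (LLContestSpec n))} {D₁ D₂ : Config A}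
    (h₁ : execConfig A ξ₁ = some D₁) (h₂ : execConfig A ξ₂ = some D₂) {p : Fin n}
    (hp : p.val ≠ 0) (hag : AgreeExc p D₁ D₂) {i : Fin n} (hi : i.val = 0)
    (hpend : (D₁.pend i).isSome) {x y : ℕ} (hx : DecidesVal L ξ₁ x) (hy : DecidesVal L ξ₂ y) :
    x = y := by
  obtain ⟨k, r, hex₁⟩ := hwf.exists_res h₁ hpend
  set γ := List.replicate k (Event.step i) ++ [Event.res i r]
  have hγ : ∀ e ∈ γ, e.proc = i := by simp +contextual [γ, or_imp, Event.proc]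
  obtain ⟨F₁, hF₁⟩ := exists_execFrom_of_isExec_append h₁ hex₁
  obtain ⟨F₂, hF₂, -⟩ := hag.execFrom hF₁ fun e he h => hp (h ▸ hγ e he ▸ hi)
  have hex₂ := isExec_of_execConfig_eq_some (execConfig_append_of_execFrom h₂ hF₂)
  have hres : Event.res i r ∈ γ := by simp [γ]
  exact Option.some.inj <| (decidesVal_eq_of_res_mem hLin hL hex₁ hi hres hx).symm.trans
    (decidesVal_eq_of_res_mem hLin hL hex₂ hi hres hy)

theorem exists_solo_decidesVal_agreeExc {η₁ η₂ : List (Event n (LLContestSpec n))}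
    {C₁ C₂ : Config A} (hcl : ClosedExec A L η₁) (h₁ : execConfig A η₁ = some C₁)
    (h₂ : execConfig A η₂ = some C₂) {p : Fin n} (hag : AgreeExc p C₁ C₂) {q : Fin n}
    (hq : q.val ≠ 0) (hqp : q ≠ p) :
    ∃ δ x D₁ D₂, CompetitorsOnly δ ∧ execConfig A (η₁ ++ δ) = some D₁ ∧
      execConfig A (η₂ ++ δ) = some D₂ ∧ AgreeExc p D₁ D₂ ∧ DecidesVal L (η₁ ++ δ) x := by
  obtain ⟨δ, x, hδ, hex, hx⟩ := hcl.exists_solo_decidesVal (isExec_of_execConfig_eq_some h₁) hq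
  obtain ⟨D₁, hD₁⟩ := exists_execFrom_of_isExec_append h₁ hex
  obtain ⟨D₂, hD₂, hagD⟩ := hag.execFrom hD₁ fun e he => hδ e he ▸ hqp
  exact ⟨δ, x, D₁, D₂, competitorsOnly_of_forall_proc_eq hq hδ,
    execConfig_append_of_execFrom h₁ hD₁, execConfig_append_of_execFrom h₂ hD₂, hagD, hx⟩

theorem Wset_inter_nonempty_of_agreeExc (hn : 3 ≤ n) (hwf : WaitFree A) (hLin : IsLinFun A L)
    (hL : PrefixClosedLin A L) {η₁ η₂ : List (Event n (LLContestSpec n))} {C₁ C₂ : Config A}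
    (hcl₁ : ClosedExec A L η₁) (hcl₂ : ClosedExec A L η₂) (h₁ : execConfig A η₁ = some C₁)
    (h₂ : execConfig A η₂ = some C₂) {p : Fin n} (hp : p.val ≠ 0) (hag : AgreeExc p C₁ C₂)
    {i : Fin n} (hi : i.val = 0) (hpend : (C₁.pend i).isSome) :
    (Wset A L η₁ ∩ Wset A L η₂).Nonempty := by
  obtain ⟨q, hq, hqp⟩ := exists_competitor_ne hn p
  obtain ⟨δ₁, x, D₁, D₂, hδ₁, hD₁, hD₂, hagD, hx⟩ :=
    exists_solo_decidesVal_agreeExc hcl₁ h₁ h₂ hag hq hqp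
  obtain ⟨δ₂, y, E₂, E₁, hδ₂, hE₂, hE₁, hagE, hy⟩ :=
    exists_solo_decidesVal_agreeExc (hcl₂.append hL hδ₁) hD₂ hD₁ hagD.symm hq hqp
  have hexE₁ := isExec_of_execConfig_eq_some hE₁
  have hpendE : (E₁.pend i).isSome := by
    rw [List.append_assoc] at hE₁
    rw [(agreeAt_of_execConfig_append h₁ hE₁ ((hδ₁.append hδ₂).proc_ne hi)).2.1]
    exact hpend
  have hxy : x = y := eq_of_decidesVal_of_agreeExc hwf hLin hL hE₁ hE₂ hp hagE.symm hi hpendE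
    (hx.of_prefix hL (List.prefix_append _ _) hexE₁) hy
  rw [List.append_assoc] at hE₂ hy
  exact ⟨x, ⟨δ₁, hδ₁, isExec_of_execConfig_eq_some hD₁, hx⟩,
    hxy ▸ ⟨δ₁ ++ δ₂, hδ₁.append hδ₂, isExec_of_execConfig_eq_some hE₂, hy⟩⟩

end Indistinguishability

section Registers

variable {n : ℕ} {S : Spec n} {ι : Type} {M : ι → BaseObject}

theorem updMem_self (mem : ∀ o, (M o).State) (o : ι) :
    updMem mem o (mem o) = mem := by
  funext o'
  by_cases h : o' = o
  · subst h; simp [updMem]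
  · simp [updMem, h]

theorem updMem_updMem_self (mem : ∀ o, (M o).State) (o : ι)
    (a b : (M o).State) : updMem (updMem mem o a) o b = updMem mem o b := by
  funext o'
  by_cases h : o' = o
  · subst h; simp [updMem]
  · simp [updMem, h]

theorem updMem_comm (mem : ∀ o, (M o).State) {o o' : ι} (h : o ≠ o')
    (a : (M o).State) (b : (M o').State) :
    updMem (updMem mem o a) o' b = updMem (updMem mem o' b) o a := by
  funext o''
  by_cases h₁ : o'' = o'
  · subst h₁; simp [updMem, Ne.symm h]
  · by_cases h₂ : o'' = o
    · subst h₂; simp [updMem, h₁]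
    · simp [updMem, h₁, h₂]

variable {A : Impl n S ι fun _ => RWRegister}

theorem nextConfig_mem_eq_or_write {C D : Config A} {e : Event n S}
    (h : nextConfig A C e = some D) :
    D.mem = C.mem ∨ ∃ i v, e = Event.step i ∧ A.prim i (C.loc i) = some v := by
  cases e with
  | inv => exact Or.inl (nextConfig_inv_spec h).2.2.1
  | res => exact Or.inl (nextConfig_res_spec h).2.2.1
  | step i =>
    cases hw : A.prim i (C.loc i) with
    | some v => exact Or.inr ⟨i, v, rfl, hw⟩
    | none =>
      left
      rw [(nextConfig_step_spec h).2.2.1, hw]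
      exact updMem_self C.mem _

theorem nextConfig_write_spec {C D : Config A} {i : Fin n} {v : ℕ}
    (h : nextConfig A C (Event.step i) = some D) (hw : A.prim i (C.loc i) = some v) :
    D.mem = updMem C.mem (A.obj i (C.loc i)) v ∧
    D.loc = Function.update C.loc i (A.updL i (C.loc i) []) ∧ D.pend = C.pend ∧
    D.hist = C.hist := by
  obtain ⟨-, -, hm, hl, hp, hh⟩ := nextConfig_step_spec h
  rw [hw] at hm hl
  exact ⟨hm, hl, hp, hh⟩

theorem exists_nextConfig_write_after {C D₁ D₂ : Config A} {e₁ : Event n S} {q : Fin n}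
    {v : ℕ} (hD₁ : nextConfig A C e₁ = some D₁) (hD₂ : nextConfig A C (Event.step q) = some D₂)
    (hw : A.prim q (C.loc q) = some v) (hq : q ≠ e₁.proc) :
    ∃ D₁₂, nextConfig A D₁ (Event.step q) = some D₁₂ ∧
      D₁₂.mem = updMem D₁.mem (A.obj q (C.loc q)) v ∧
      D₁₂.loc = Function.update D₁.loc q (A.updL q (C.loc q) []) ∧ D₁₂.pend = D₁.pend ∧
      D₁₂.hist = D₁.hist := by
  obtain ⟨hl, hp, -⟩ := nextConfig_agreeAt_of_ne hD₁ hq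
  obtain ⟨hpend, hret, -⟩ := nextConfig_step_spec hD₂
  obtain ⟨D₁₂, hD₁₂⟩ := Option.isSome_iff_exists.1
    (nextConfig_step_isSome (hp ▸ hpend) (hl ▸ hret) (A := A))
  have := nextConfig_write_spec hD₁₂ (hl ▸ hw)
  rw [hl] at this
  exact ⟨D₁₂, hD₁₂, this⟩

theorem exists_agreeExc_of_write_write {C D₁ D₂ : Config A} {p q : Fin n} {v₁ v₂ : ℕ}
    (hD₁ : nextConfig A C (Event.step p) = some D₁) (hD₂ : nextConfig A C (Event.step q) = some D₂)
    (hw₁ : A.prim p (C.loc p) = some v₁) (hw₂ : A.prim q (C.loc q) = some v₂) (hpq : p ≠ q) :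
    ∃ δ₂ F₁ F₂, δ₂ ⊆ [Event.step p] ∧ execFrom A C [Event.step p, Event.step q] = some F₁ ∧
      execFrom A C (Event.step q :: δ₂) = some F₂ ∧ AgreeExc p F₁ F₂ := by
  obtain ⟨hm₁, hl₁, hp₁, hh₁⟩ := nextConfig_write_spec hD₁ hw₁
  obtain ⟨hm₂, hl₂, hp₂, hh₂⟩ := nextConfig_write_spec hD₂ hw₂
  obtain ⟨D₁₂, hD₁₂, hm₁₂, hl₁₂, hp₁₂, hh₁₂⟩ :=
    exists_nextConfig_write_after hD₁ hD₂ hw₂ hpq.symm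
  have hex₁₂ : execFrom A C [Event.step p, Event.step q] = some D₁₂ := by
    simp [execFrom_cons, hD₁, hD₁₂, execFrom_nil]
  by_cases ho : A.obj p (C.loc p) = A.obj q (C.loc q)
  · refine ⟨[], D₁₂, D₂, by simp, hex₁₂, by simp [execFrom_singleton, hD₂], ?_, fun j hj => ?_⟩
    · rw [hm₁₂, hm₁, ho, hm₂]
      exact updMem_updMem_self _ _ _ _
    · refine ⟨?_, by simp [hp₁₂, hp₁, hp₂], by simp [hh₁₂, hh₁, hh₂]⟩
      by_cases hjq : j = q
      · subst hjq; simp [hl₁₂, hl₂]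
      · simp [hl₁₂, hl₁, hl₂, Function.update_of_ne hjq, Function.update_of_ne hj]
  · obtain ⟨D₂₁, hD₂₁, hm₂₁, hl₂₁, hp₂₁, hh₂₁⟩ := exists_nextConfig_write_after hD₂ hD₁ hw₁ hpq
    refine ⟨[Event.step p], D₁₂, D₂₁, by simp, hex₁₂,
      by simp [execFrom_cons, hD₂, hD₂₁, execFrom_nil], ?_, fun j _ => ?_⟩
    · rw [hm₁₂, hm₁, hm₂₁, hm₂]
      exact updMem_comm _ ho _ _
    · simp [AgreeAt, hl₁₂, hl₁, hl₂₁, hl₂, hp₁₂, hp₁, hp₂₁, hp₂, hh₁₂, hh₁, hh₂₁, hh₂,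
        Function.update_comm hpq]

theorem exists_agreeExc_of_nextConfig {C D₁ D₂ : Config A} {e₁ e₂ : Event n S}
    (hD₁ : nextConfig A C e₁ = some D₁) (hD₂ : nextConfig A C e₂ = some D₂)
    (hne : e₁.proc ≠ e₂.proc) :
    ∃ δ₁ δ₂ r F₁ F₂, δ₁ ⊆ [e₂] ∧ δ₂ ⊆ [e₁] ∧ (r = e₁.proc ∨ r = e₂.proc) ∧
      execFrom A C (e₁ :: δ₁) = some F₁ ∧ execFrom A C (e₂ :: δ₂) = some F₂ ∧
      AgreeExc r F₁ F₂ := by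
  rcases nextConfig_mem_eq_or_write hD₁ with hmem₁ | ⟨p, v₁, rfl, hw₁⟩
  · obtain ⟨D₁₂, hD₁₂, hag⟩ := exists_agreeExc_of_mem_eq hD₁ hmem₁ hD₂ hne.symm
    exact ⟨[e₂], [], e₁.proc, D₁₂, D₂, by simp, by simp, Or.inl rfl,
      by simp [execFrom_cons, hD₁, hD₁₂, execFrom_nil], by simp [execFrom_singleton, hD₂], hag⟩
  rcases nextConfig_mem_eq_or_write hD₂ with hmem₂ | ⟨q, v₂, rfl, hw₂⟩
  · obtain ⟨D₂₁, hD₂₁, hag⟩ := exists_agreeExc_of_mem_eq hD₂ hmem₂ hD₁ hne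
    exact ⟨[], [Event.step p], e₂.proc, D₁, D₂₁, by simp, by simp, Or.inr rfl,
      by simp [execFrom_singleton, hD₁], by simp [execFrom_cons, hD₂, hD₂₁, execFrom_nil],
      hag.symm⟩
  obtain ⟨δ₂, F₁, F₂, hδ₂, hF₁, hF₂, hag⟩ := exists_agreeExc_of_write_write hD₁ hD₂ hw₁ hw₂ hne
  exact ⟨[Event.step q], δ₂, p, F₁, F₂, by simp, hδ₂, Or.inl rfl, hF₁, hF₂, hag⟩

end Registers

section RWRegisters

variable {n : ℕ} {ι : Type} {A : Impl n (LLContestSpec n) ι fun _ => RWRegister}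
  {L : List (Event n (LLContestSpec n)) → List (ℕ × (LLContestSpec n).Res)}

theorem Wset_snoc_inter_nonempty (hn : 3 ≤ n) (hwf : WaitFree A) (hLin : IsLinFun A L)
    (hL : PrefixClosedLin A L) {α : List (Event n (LLContestSpec n))} {C : Config A}
    (hC : execConfig A α = some C) (hcl : ClosedExec A L α) {i : Fin n} (hi : i.val = 0)
    (hpend : (C.pend i).isSome) {e₁ e₂ : Event n (LLContestSpec n)} {D₁ D₂ : Config A}
    (he₁ : e₁.proc.val ≠ 0) (he₂ : e₂.proc.val ≠ 0) (hD₁ : nextConfig A C e₁ = some D₁)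
    (hD₂ : nextConfig A C e₂ = some D₂) :
    (Wset A L (α ++ [e₁]) ∩ Wset A L (α ++ [e₂])).Nonempty := by
  by_cases hproc : e₁.proc = e₂.proc
  · obtain rfl : e₁ = e₂ := by
      rw [eq_llNextEvent_of_nextConfig hD₁, eq_llNextEvent_of_nextConfig hD₂, hproc]
    rw [Set.inter_self]
    exact (hcl.append hL fun e he => by simp_all).Wset_nonempty
      (isExec_of_execConfig_eq_some (execConfig_snoc_of_nextConfig hC hD₁)) he₁
  obtain ⟨δ₁, δ₂, r, F₁, F₂, hδ₁, hδ₂, hr, hF₁, hF₂, hag⟩ :=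
    exists_agreeExc_of_nextConfig hD₁ hD₂ hproc
  have hco₁ : CompetitorsOnly (e₁ :: δ₁) := fun e he => by
    rcases List.mem_cons.1 he with rfl | he
    exacts [he₁, List.mem_singleton.1 (hδ₁ he) ▸ he₂]
  have hco₂ : CompetitorsOnly (e₂ :: δ₂) := fun e he => by
    rcases List.mem_cons.1 he with rfl | he
    exacts [he₂, List.mem_singleton.1 (hδ₂ he) ▸ he₁]
  have h₁ := execConfig_append_of_execFrom hC hF₁
  have hpend₁ : (F₁.pend i).isSome := by
    rw [(agreeAt_of_execConfig_append hC h₁ (hco₁.proc_ne hi)).2.1]; exact hpend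
  obtain ⟨z, hz₁, hz₂⟩ := Wset_inter_nonempty_of_agreeExc hn hwf hLin hL (hcl.append hL hco₁)
    (hcl.append hL hco₂) h₁ (execConfig_append_of_execFrom hC hF₂)
    (by rcases hr with rfl | rfl <;> assumption) hag hi hpend₁
  exact ⟨z, Wset_append_cons_subset hco₁ hz₁, Wset_append_cons_subset hco₂ hz₂⟩

theorem exists_snoc_nontrivial (hn : 3 ≤ n) (hwf : WaitFree A) (hLin : IsLinFun A L)
    (hL : PrefixClosedLin A L) {α : List (Event n (LLContestSpec n))} (hα : IsExec A α)
    (hcl : ClosedExec A L α) (hW : (Wset A L α).Nontrivial) :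
    ∃ e : Event n (LLContestSpec n), e.proc.val ≠ 0 ∧ IsExec A (α ++ [e]) ∧
      (Wset A L (α ++ [e])).Nontrivial := by
  obtain ⟨C, hC⟩ := Option.isSome_iff_exists.1 hα
  have hpend := referee_pend_isSome_of_nontrivial hLin hL hC hW (i := ⟨0, by omega⟩) rfl
  obtain ⟨x, hx, y, hy, hxy⟩ := id hW
  obtain ⟨e₁, D₁, he₁, hD₁, hx₁⟩ := exists_nextConfig_mem_Wset_snoc hLin hL hC hW hx
  obtain ⟨e₂, D₂, he₂, hD₂, hy₂⟩ := exists_nextConfig_mem_Wset_snoc hLin hL hC hW hy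
  have hexec : ∀ {e D}, nextConfig A C e = some D → IsExec A (α ++ [e]) := fun hD =>
    isExec_of_execConfig_eq_some (execConfig_snoc_of_nextConfig hC hD)
  by_contra! h
  obtain ⟨z, hz₁, hz₂⟩ :=
    Wset_snoc_inter_nonempty hn hwf hLin hL hC hcl rfl hpend he₁ he₂ hD₁ hD₂
  exact hxy ((h e₁ he₁ (hexec hD₁) hx₁ hz₁).trans (h e₂ he₂ (hexec hD₂) hz₂ hy₂))

theorem not_nontrivial_Wset_of_closed (hn : 3 ≤ n) (hwf : WaitFree A) (hLin : IsLinFun A L)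
    (hL : PrefixClosedLin A L) {α : List (Event n (LLContestSpec n))} (hα : IsExec A α)
    (hcl : ClosedExec A L α) : ¬ (Wset A L α).Nontrivial := by
  intro hW
  obtain ⟨E, hE, hP⟩ := exists_seq_of_forall_exists_snoc
    (P := fun γ => IsExec A γ ∧ ClosedExec A L γ ∧ (Wset A L γ).Nontrivial)
    (Q := fun e => e.proc.val ≠ 0)
    (fun γ ⟨hγ, hclγ, hWγ⟩ => by
      obtain ⟨e, he, hex, hWe⟩ := exists_snoc_nontrivial hn hwf hLin hL hγ hclγ hWγ
      exact ⟨e, he, hex, hclγ.append hL fun e' he' => by simp_all, hWe⟩)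
    ⟨hα, hcl, hW⟩
  obtain ⟨m, x, hx⟩ := hcl E hE fun m => (hP m).1
  exact not_decidesVal_of_nontrivial hLin hL (hP m).2.2 x hx

end RWRegisters

/-- (Lemma `closed`.) Assume the wait-free strongly linearizable
implementation `A` of the long-lived contest object uses only read/write registers
and `n ≥ 3`.  If a finite execution `α` of `A` is closed, then `W(α)` contains exactly
one element. -/
theorem closed_valency_singleton_rw :
    ∀ (n : ℕ) (hn : 3 ≤ n) (ι : Type)
      (A : Impl n (LLContestSpec n) ι (fun _ => RWRegister))
      (L : List (Event n (LLContestSpec n)) → List (ℕ × (LLContestSpec n).Res)),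
      WaitFree A → IsLinFun A L → PrefixClosedLin A L →
      ∀ α : List (Event n (LLContestSpec n)), IsExec A α → ClosedExec A L α →
        ∃ x : ℕ, Wset A L α = {x} := by
  intro n hn ι A L hwf hLin hL α hα hcl
  exact Set.exists_eq_singleton_iff_nonempty_subsingleton.2
    ⟨hcl.Wset_nonempty hα (q := ⟨1, by omega⟩) one_ne_zero,
      Set.not_nontrivial_iff.1 (not_nontrivial_Wset_of_closed hn hwf hLin hL hα hcl)⟩
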